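/- arXiv:1307.6535 — 3 statements merged into one kernel-verified Lean document; each statement's English description precedes it below -/
import Mathlib

section
/- Let Z be a connected topological space with no cut point, and let O' be a subset of Z such that both O' and Z \ O' contain at least two points. Then the topological boundary of O' contains at least two points. -/
/-!
A preconnected set meeting both `t` and its complement meets `frontier t`: otherwise it is
covered by the disjoint open sets `interior t` and `interior tᶜ`. Applied to `Z \ {c}`, which
meets both `O'` and its complement because each has two points, this gives a boundary point
other than any prescribed `c`.
-/

open Set

theorem IsPreconnected.inter_frontier_nonempty {X : Type*} [TopologicalSpace X] {s t : Set X}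
    (hs : IsPreconnected s) (hst : (s ∩ t).Nonempty) (hst' : (s \ t).Nonempty) :
    (s ∩ frontier t).Nonempty := by
  by_contra hfr
  have hcover : s ⊆ interior t ∪ interior tᶜ := by
    intro x hxs
    have hx : x ∉ frontier t := fun hx => hfr ⟨x, hxs, hx⟩
    rw [frontier, mem_sdiff, not_and_not_right] at hx
    rw [interior_compl]
    by_cases hcl : x ∈ closure t
    exacts [Or.inl (hx hcl), Or.inr hcl]
  have hint : ∀ x ∈ s, x ∈ t → x ∈ interior t := fun x hxs hxt =>
    (hcover hxs).resolve_right fun h => interior_subset h hxt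
  have hint' : ∀ x ∈ s, x ∉ t → x ∈ interior tᶜ := fun x hxs hxt =>
    (hcover hxs).resolve_left fun h => hxt (interior_subset h)
  obtain ⟨x, hxs, hxt⟩ := hst
  obtain ⟨y, hys, hyt⟩ := hst'
  obtain ⟨z, -, hzt, hzt'⟩ := hs _ _ isOpen_interior isOpen_interior hcover
    ⟨x, hxs, hint x hxs hxt⟩ ⟨y, hys, hint' y hys hyt⟩
  exact interior_subset hzt' (interior_subset hzt)

theorem exists_mem_frontier_ne_of_isPreconnected_compl_singleton {X : Type*}
    [TopologicalSpace X] {s : Set X} {c : X} (hc : IsPreconnected ({c}ᶜ : Set X))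
    (hs : s.Nontrivial) (hsc : sᶜ.Nontrivial) : ∃ x ∈ frontier s, x ≠ c := by
  obtain ⟨a, has, hac⟩ := hs.exists_ne c
  obtain ⟨b, hbs, hbc⟩ := hsc.exists_ne c
  obtain ⟨x, hxc, hx⟩ := hc.inter_frontier_nonempty ⟨a, hac, has⟩ ⟨b, hbc, hbs⟩
  exact ⟨x, hx, hxc⟩

theorem boundary_nontrivial_of_no_cut_point_general
    {Z : Type*} [TopologicalSpace Z]
    (hnc : ∀ c : Z, IsPreconnected ({c}ᶜ : Set Z))
    (O' : Set Z) (hO : O'.Nontrivial) (hOc : O'ᶜ.Nontrivial) :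
    (frontier O').Nontrivial := by
  obtain ⟨a, -⟩ := hO.nonempty
  obtain ⟨x, hx, -⟩ := exists_mem_frontier_ne_of_isPreconnected_compl_singleton (hnc a) hO hOc
  obtain ⟨y, hy, hyx⟩ := exists_mem_frontier_ne_of_isPreconnected_compl_singleton (hnc x) hO hOc
  exact ⟨x, hx, y, hy, hyx.symm⟩

theorem boundary_nontrivial_of_no_cut_point
    {Z : Type*} [TopologicalSpace Z] [ConnectedSpace Z]
    (hnc : ∀ c : Z, IsPreconnected ({c}ᶜ : Set Z))
    (O' : Set Z) (hO : O'.Nontrivial) (hOc : O'ᶜ.Nontrivial) :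
    (frontier O').Nontrivial :=
  boundary_nontrivial_of_no_cut_point_general hnc O' hO hOc
end

section
/- Let u be a harmonic function on the open disk D_R(0) of radius R centered at 0, and let 0 < r < R. Then the function ṽ(z) = (1/2π)∫₀^{2π} u(re^{iθ}) · (2 r Im(e^{-iθ} z)) / |re^{iθ} − z|² dθ, defined for |z| < r, is a harmonic conjugate of u on D_r(0) with ṽ(0) = 0, i.e., u + iṽ is holomorphic on D_r(0) and ṽ(0) = 0. -/
open Complex Metric

/-- Partial derivative with respect to x. -/
noncomputable def pdx (u : ℂ → ℝ) (z : ℂ) : ℝ :=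
  deriv (fun t : ℝ => u (z + t)) 0

/-- Partial derivative with respect to y. -/
noncomputable def pdy (u : ℂ → ℝ) (z : ℂ) : ℝ :=
  deriv (fun t : ℝ => u (z + t * Complex.I)) 0

/-- `u` is harmonic on `s`: twice continuously differentiable and satisfies
Laplace's equation. -/
def HarmonicOn (u : ℂ → ℝ) (s : Set ℂ) : Prop :=
  ContDiffOn ℝ 2 u s ∧ ∀ z ∈ s, pdx (pdx u) z + pdy (pdy u) z = 0

/-- The Poisson-type integral giving the harmonic conjugate vanishing at 0. -/
noncomputable def conjInt (u : ℂ → ℝ) (r : ℝ) (z : ℂ) : ℝ :=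
  (1 / (2 * Real.pi)) *
    ∫ θ in (0:ℝ)..(2 * Real.pi),
      u (r * Complex.exp (θ * Complex.I)) *
        (2 * r * (Complex.exp (-θ * Complex.I) * z).im) /
          (‖(r * Complex.exp (θ * Complex.I) - z)‖) ^ 2

open Real MeasureTheory

set_option maxHeartbeats 2000000
lemma pdx_eq {u : ℂ → ℝ} {z : ℂ} (h : DifferentiableAt ℝ u z) :
    pdx u z = fderiv ℝ u z 1 := by
  have hc : HasDerivAt (fun t : ℝ => z + (t:ℂ)) 1 0 := by
    simpa using (Complex.ofRealCLM.hasDerivAt (x := (0:ℝ))).const_add z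
  have hu' : HasFDerivAt u (fderiv ℝ u z) (z + ((0:ℝ):ℂ)) := by simpa using h.hasFDerivAt
  have := hu'.comp_hasDerivAt (x := 0) hc
  simpa [pdx, Function.comp_def] using this.deriv

lemma pdy_eq {u : ℂ → ℝ} {z : ℂ} (h : DifferentiableAt ℝ u z) :
    pdy u z = fderiv ℝ u z Complex.I := by
  have hc : HasDerivAt (fun t : ℝ => z + (t:ℂ) * Complex.I) Complex.I 0 := by
    simpa using ((Complex.ofRealCLM.hasDerivAt (x := (0:ℝ))).mul_const Complex.I).const_add z
  have hu' : HasFDerivAt u (fderiv ℝ u z) (z + ((0:ℝ):ℂ) * Complex.I) := by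
    simpa using h.hasFDerivAt
  have := hu'.comp_hasDerivAt (x := 0) hc
  simpa [pdy, Function.comp_def] using this.deriv


section
variable {u : ℂ → ℝ} {R : ℝ}

lemma udiff (hu : HarmonicOn u (ball (0:ℂ) R)) {z : ℂ} (hz : z ∈ ball (0:ℂ) R) :
    DifferentiableAt ℝ u z :=
  ((hu.1.differentiableOn (by norm_num)) z hz).differentiableAt
    (isOpen_ball.mem_nhds hz)

lemma Pcd (hu : HarmonicOn u (ball (0:ℂ) R)) :
    ContDiffOn ℝ 1 (fderiv ℝ u) (ball (0:ℂ) R) :=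
  hu.1.fderiv_of_isOpen isOpen_ball (by norm_num)

lemma Pdiff (hu : HarmonicOn u (ball (0:ℂ) R)) {p : ℂ} (hp : p ∈ ball (0:ℂ) R) :
    DifferentiableAt ℝ (fderiv ℝ u) p :=
  (((Pcd hu).differentiableOn (by norm_num)) p hp).differentiableAt
    (isOpen_ball.mem_nhds hp)

/-- second partials as second fderiv entries -/
lemma lap' (hu : HarmonicOn u (ball (0:ℂ) R)) {p : ℂ} (hp : p ∈ ball (0:ℂ) R) :
    fderiv ℝ (fderiv ℝ u) p 1 1 + fderiv ℝ (fderiv ℝ u) p Complex.I Complex.I = 0 := by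
  have hball : ∀ᶠ z in nhds p, z ∈ ball (0:ℂ) R := isOpen_ball.eventually_mem hp
  have heqx : pdx u =ᶠ[nhds p] (fun z => fderiv ℝ u z 1) :=
    hball.mono fun z hz => pdx_eq (udiff hu hz)
  have heqy : pdy u =ᶠ[nhds p] (fun z => fderiv ℝ u z Complex.I) :=
    hball.mono fun z hz => pdy_eq (udiff hu hz)
  have hP := Pdiff hu hp
  have hd1 : DifferentiableAt ℝ (fun z => fderiv ℝ u z 1) p :=
    ((ContinuousLinearMap.apply ℝ ℝ (1:ℂ)).hasFDerivAt.comp p hP.hasFDerivAt).differentiableAt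
  have hdI : DifferentiableAt ℝ (fun z => fderiv ℝ u z Complex.I) p :=
    ((ContinuousLinearMap.apply ℝ ℝ (Complex.I)).hasFDerivAt.comp p hP.hasFDerivAt).differentiableAt
  have h1 : pdx (pdx u) p = fderiv ℝ (fderiv ℝ u) p 1 1 := by
    have hdp : DifferentiableAt ℝ (pdx u) p := hd1.congr_of_eventuallyEq heqx
    rw [pdx_eq hdp, heqx.fderiv_eq]
    have := ((ContinuousLinearMap.apply ℝ ℝ (1:ℂ)).hasFDerivAt.comp p hP.hasFDerivAt).fderiv
    rw [show (fun z => fderiv ℝ u z 1) = (⇑((ContinuousLinearMap.apply ℝ ℝ) (1:ℂ)) ∘ fderiv ℝ u) from rfl, this]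
    simp
  have h2 : pdy (pdy u) p = fderiv ℝ (fderiv ℝ u) p Complex.I Complex.I := by
    have hdp : DifferentiableAt ℝ (pdy u) p := hdI.congr_of_eventuallyEq heqy
    rw [pdy_eq hdp, heqy.fderiv_eq]
    have := ((ContinuousLinearMap.apply ℝ ℝ (Complex.I)).hasFDerivAt.comp p hP.hasFDerivAt).fderiv
    rw [show (fun z => fderiv ℝ u z Complex.I) = (⇑((ContinuousLinearMap.apply ℝ ℝ) (Complex.I)) ∘ fderiv ℝ u) from rfl, this]
    simp
  rw [← h1, ← h2]
  exact hu.2 p hp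

end

lemma clm_decomp {E : Type*} [NormedAddCommGroup E] [NormedSpace ℝ E]
    (L : ℂ →L[ℝ] E) (w : ℂ) : L w = w.re • L 1 + w.im • L Complex.I := by
  conv_lhs => rw [show w = w.re • (1:ℂ) + w.im • Complex.I by
    simpa [Complex.real_smul] using (Complex.re_add_im w).symm]
  rw [map_add, _root_.map_smul, _root_.map_smul]


section
variable {u : ℂ → ℝ} {R : ℝ}

noncomputable def hcV (u : ℂ → ℝ) (z : ℂ) : ℝ :=
  ∫ t in (0:ℝ)..1,
    (-(fderiv ℝ u (t • z) Complex.I) * z.re + (fderiv ℝ u (t • z) 1) * z.im)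

lemma hcV_hasFDerivAt (hu : HarmonicOn u (ball (0:ℂ) R)) {z₀ : ℂ}
    (hz : z₀ ∈ ball (0:ℂ) R) :
    HasFDerivAt (hcV u)
      ((-(fderiv ℝ u z₀ Complex.I)) • Complex.reCLM
        + (fderiv ℝ u z₀ 1) • Complex.imCLM) z₀ := by
  set P : ℂ → (ℂ →L[ℝ] ℝ) := fderiv ℝ u with hP
  set Q : ℂ → (ℂ →L[ℝ] (ℂ →L[ℝ] ℝ)) := fderiv ℝ (fderiv ℝ u) with hQ
  have hz' : ‖z₀‖ < R := mem_ball_zero_iff.1 hz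
  set ε : ℝ := (R - ‖z₀‖) / 2 with hε
  have εpos : 0 < ε := by simp only [hε]; linarith
  have hlt : ‖z₀‖ + ε < R := by simp only [hε]; linarith
  have hmemK : ∀ x : ℂ, ‖x‖ ≤ ‖z₀‖ + ε → ∀ t : ℝ, |t| ≤ 1 →
      t • x ∈ closedBall (0:ℂ) (‖z₀‖ + ε) := by
    intro x hx t ht
    rw [mem_closedBall_zero_iff, norm_smul, Real.norm_eq_abs]
    calc |t| * ‖x‖ ≤ 1 * (‖z₀‖ + ε) := by
          apply mul_le_mul ht hx (norm_nonneg x) zero_le_one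
      _ = ‖z₀‖ + ε := one_mul _
  have hKball : closedBall (0:ℂ) (‖z₀‖ + ε) ⊆ ball (0:ℂ) R :=
    closedBall_subset_ball hlt
  have hxnorm : ∀ x ∈ ball z₀ ε, ‖x‖ ≤ ‖z₀‖ + ε := by
    intro x hx
    have h1 : ‖x‖ - ‖z₀‖ ≤ ‖x - z₀‖ := norm_sub_norm_le x z₀
    have h2 : ‖x - z₀‖ < ε := by rwa [← dist_eq_norm, ← mem_ball]
    linarith
  have hmemB : ∀ x : ℂ, ‖x‖ ≤ ‖z₀‖ + ε → ∀ t : ℝ, |t| ≤ 1 →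
      t • x ∈ ball (0:ℂ) R := fun x hx t ht => hKball (hmemK x hx t ht)
  -- continuity of P and Q evaluations
  have hPc : ContinuousOn P (ball (0:ℂ) R) := (Pcd hu).continuousOn
  have hQc : ContinuousOn Q (ball (0:ℂ) R) :=
    (Pcd hu).continuousOn_fderiv_of_isOpen isOpen_ball le_rfl
  have hPev : ∀ a : ℂ, ContinuousOn (fun p => P p a) (ball (0:ℂ) R) := fun a =>
    (ContinuousLinearMap.apply ℝ ℝ a).continuous.comp_continuousOn hPc
  have hQev : ∀ a b : ℂ, ContinuousOn (fun p => Q p a b) (ball (0:ℂ) R) := fun a b =>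
    (ContinuousLinearMap.apply ℝ ℝ b).continuous.comp_continuousOn
      ((ContinuousLinearMap.apply ℝ (ℂ →L[ℝ] ℝ) a).continuous.comp_continuousOn hQc)
  -- a single scalar bound on the compact set
  set g : ℂ → ℝ := fun p => |P p 1| + |P p Complex.I| + |Q p 1 1| + |Q p 1 Complex.I|
    + |Q p Complex.I 1| + |Q p Complex.I Complex.I| with hg
  have hgc : ContinuousOn g (closedBall (0:ℂ) (‖z₀‖ + ε)) := by
    apply ContinuousOn.mono _ hKball
    exact (((((hPev 1).abs.add (hPev Complex.I).abs).add (hQev 1 1).abs).add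
      (hQev 1 Complex.I).abs).add (hQev Complex.I 1).abs).add (hQev Complex.I Complex.I).abs
  have h0K : (0:ℂ) ∈ closedBall (0:ℂ) (‖z₀‖ + ε) := by
    simp only [mem_closedBall_zero_iff, norm_zero]; positivity
  obtain ⟨xm, -, hMmax⟩ := (isCompact_closedBall (0:ℂ) (‖z₀‖ + ε)).exists_isMaxOn
    ⟨0, h0K⟩ hgc
  set M : ℝ := g xm with hM
  have hgnn : ∀ p, 0 ≤ g p := by intro p; simp only [hg]; positivity
  have hM0 : 0 ≤ M := hgnn xm
  have hgle : ∀ y ∈ closedBall (0:ℂ) (‖z₀‖ + ε), g y ≤ M := fun y hy => hMmax hy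
  set r₁ : ℝ := ‖z₀‖ + ε with hr₁
  have hr₁0 : 0 ≤ r₁ := le_trans (norm_nonneg z₀) (by simp only [hr₁]; linarith)
  set C : ℝ := 2 * M + 4 * r₁ * M with hC
  -- the derivative candidate
  set F' : ℂ → ℝ → (ℂ →L[ℝ] ℝ) := fun x t =>
    (-(P (t • x) Complex.I)) • Complex.reCLM + (P (t • x) 1) • Complex.imCLM
    + (t * x.re) • (-((ContinuousLinearMap.apply ℝ ℝ Complex.I).comp (Q (t • x))))
    + (t * x.im) • ((ContinuousLinearMap.apply ℝ ℝ (1:ℂ)).comp (Q (t • x))) with hF'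
  have hF'apply : ∀ x t (w : ℂ), F' x t w =
      -(P (t • x) Complex.I) * w.re + (P (t • x) 1) * w.im
      + (t * x.re) * (-(Q (t • x) w Complex.I)) + (t * x.im) * (Q (t • x) w 1) := by
    intro x t w
    simp [hF', ContinuousLinearMap.apply]
  -- differentiability in x
  have key : ∀ t : ℝ, |t| ≤ 1 → ∀ x ∈ ball z₀ ε,
      HasFDerivAt (fun z : ℂ =>
        -(P (t • z) Complex.I) * z.re + (P (t • z) 1) * z.im) (F' x t) x := by
    intro t ht x hx
    have hxB : t • x ∈ ball (0:ℂ) R := hmemB x (hxnorm x hx) t ht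
    have h0 : HasFDerivAt (fun z : ℂ => t • z) (t • ContinuousLinearMap.id ℝ ℂ) x :=
      (hasFDerivAt_id x).const_smul t
    have hPs : HasFDerivAt (fun z : ℂ => P (t • z)) (t • Q (t • x)) x := by
      have := (Pdiff hu hxB).hasFDerivAt.comp x h0
      refine this.congr_fderiv ?_
      ext w
      simp [hQ]
    have hA : HasFDerivAt (fun z : ℂ => P (t • z) Complex.I)
        ((ContinuousLinearMap.apply ℝ ℝ Complex.I).comp (t • Q (t • x))) x :=
      (ContinuousLinearMap.apply ℝ ℝ Complex.I).hasFDerivAt.comp x hPs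
    have hB : HasFDerivAt (fun z : ℂ => P (t • z) 1)
        ((ContinuousLinearMap.apply ℝ ℝ (1:ℂ)).comp (t • Q (t • x))) x :=
      (ContinuousLinearMap.apply ℝ ℝ (1:ℂ)).hasFDerivAt.comp x hPs
    have := (hA.neg.mul Complex.reCLM.hasFDerivAt).add (hB.mul Complex.imCLM.hasFDerivAt)
    refine this.congr_fderiv ?_
    ext w
    rw [hF'apply]
    simp [ContinuousLinearMap.apply]
    ring
  -- continuity in t
  have hz₀r : ‖z₀‖ ≤ r₁ := by simp only [hr₁]; linarith
  have htsm : ∀ x : ℂ, ‖x‖ ≤ r₁ → Set.MapsTo (fun t : ℝ => t • x) (Set.Icc 0 1)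
      (ball (0:ℂ) R) := by
    intro x hx t ht
    exact hmemB x hx t (abs_le.2 ⟨by linarith [ht.1], ht.2⟩)
  have htcont : ∀ x : ℂ, ‖x‖ ≤ r₁ → ContinuousOn (fun t : ℝ => P (t • x)) (Set.Icc 0 1) := by
    intro x hx
    exact hPc.comp ((continuous_id.smul continuous_const).continuousOn) (htsm x hx)
  have htcontQ : ∀ x : ℂ, ‖x‖ ≤ r₁ → ContinuousOn (fun t : ℝ => Q (t • x)) (Set.Icc 0 1) := by
    intro x hx
    exact hQc.comp ((continuous_id.smul continuous_const).continuousOn) (htsm x hx)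
  have hFcont : ∀ x : ℂ, ‖x‖ ≤ r₁ → ContinuousOn
      (fun t : ℝ => -(P (t • x) Complex.I) * x.re + (P (t • x) 1) * x.im) (Set.Icc 0 1) := by
    intro x hx
    exact ((((ContinuousLinearMap.apply ℝ ℝ Complex.I).continuous.comp_continuousOn
      (htcont x hx)).neg.mul continuousOn_const).add
      (((ContinuousLinearMap.apply ℝ ℝ (1:ℂ)).continuous.comp_continuousOn
        (htcont x hx)).mul continuousOn_const))
  have hF'cont : ContinuousOn (fun t => F' z₀ t) (Set.Icc (0:ℝ) 1) := by
    have h1 := htcont z₀ hz₀r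
    have h2 := htcontQ z₀ hz₀r
    refine ContinuousOn.add (ContinuousOn.add (ContinuousOn.add ?_ ?_) ?_) ?_
    · exact (((ContinuousLinearMap.apply ℝ ℝ Complex.I).continuous.comp_continuousOn
        h1).neg).smul continuousOn_const
    · exact (((ContinuousLinearMap.apply ℝ ℝ (1:ℂ)).continuous.comp_continuousOn
        h1).smul continuousOn_const)
    · exact ((continuousOn_id.mul continuousOn_const).smul
        ((((ContinuousLinearMap.compL ℝ ℂ (ℂ →L[ℝ] ℝ) ℝ)
          (ContinuousLinearMap.apply ℝ ℝ Complex.I)).continuous.comp_continuousOn h2).neg))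
    · exact ((continuousOn_id.mul continuousOn_const).smul
        (((ContinuousLinearMap.compL ℝ ℂ (ℂ →L[ℝ] ℝ) ℝ)
          (ContinuousLinearMap.apply ℝ ℝ (1:ℂ))).continuous.comp_continuousOn h2))
  have hIoc : Set.uIoc (0:ℝ) 1 = Set.Ioc (0:ℝ) 1 := Set.uIoc_of_le zero_le_one
  have hF_meas : ∀ᶠ x in nhds z₀, MeasureTheory.AEStronglyMeasurable
      (fun t : ℝ => -(P (t • x) Complex.I) * x.re + (P (t • x) 1) * x.im)
      (MeasureTheory.volume.restrict (Set.uIoc (0:ℝ) 1)) := by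
    filter_upwards [ball_mem_nhds z₀ εpos] with x hx
    rw [hIoc]
    exact ((hFcont x (hxnorm x hx)).mono Set.Ioc_subset_Icc_self).aestronglyMeasurable
      measurableSet_Ioc
  have hF_int : IntervalIntegrable
      (fun t : ℝ => -(P (t • z₀) Complex.I) * z₀.re + (P (t • z₀) 1) * z₀.im)
      MeasureTheory.volume 0 1 := by
    apply ContinuousOn.intervalIntegrable
    rw [Set.uIcc_of_le zero_le_one]
    exact hFcont z₀ hz₀r
  have hF'int : IntervalIntegrable (fun t => F' z₀ t) MeasureTheory.volume 0 1 := by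
    apply ContinuousOn.intervalIntegrable
    rw [Set.uIcc_of_le zero_le_one]
    exact hF'cont
  have hF'_meas : MeasureTheory.AEStronglyMeasurable (fun t => F' z₀ t)
      (MeasureTheory.volume.restrict (Set.uIoc (0:ℝ) 1)) := by
    rw [hIoc]
    exact (hF'cont.mono Set.Ioc_subset_Icc_self).aestronglyMeasurable measurableSet_Ioc
  have hC0 : (0:ℝ) ≤ C := by simp only [hC]; nlinarith [hM0, hr₁0]
  have h_bound : ∀ᵐ t ∂(MeasureTheory.volume), t ∈ Set.uIoc (0:ℝ) 1 →
      ∀ x ∈ ball z₀ ε, ‖F' x t‖ ≤ C := by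
    refine MeasureTheory.ae_of_all _ (fun t ht x hx => ?_)
    rw [hIoc] at ht
    have ht' : |t| ≤ 1 := abs_le.2 ⟨by linarith [ht.1], ht.2⟩
    have hpK : t • x ∈ closedBall (0:ℂ) r₁ := hmemK x (hxnorm x hx) t ht'
    have hgp := hgle _ hpK
    simp only [hg] at hgp
    have c1 : |P (t • x) 1| ≤ M := by
      have := abs_nonneg (P (t • x) Complex.I); have := abs_nonneg (Q (t • x) 1 1)
      have := abs_nonneg (Q (t • x) 1 Complex.I); have := abs_nonneg (Q (t • x) Complex.I 1)
      have := abs_nonneg (Q (t • x) Complex.I Complex.I); linarith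
    have c2 : |P (t • x) Complex.I| ≤ M := by
      have := abs_nonneg (P (t • x) 1); have := abs_nonneg (Q (t • x) 1 1)
      have := abs_nonneg (Q (t • x) 1 Complex.I); have := abs_nonneg (Q (t • x) Complex.I 1)
      have := abs_nonneg (Q (t • x) Complex.I Complex.I); linarith
    have c3 : |Q (t • x) 1 1| ≤ M := by
      have := abs_nonneg (P (t • x) 1); have := abs_nonneg (P (t • x) Complex.I)
      have := abs_nonneg (Q (t • x) 1 Complex.I); have := abs_nonneg (Q (t • x) Complex.I 1)
      have := abs_nonneg (Q (t • x) Complex.I Complex.I); linarith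
    have c4 : |Q (t • x) 1 Complex.I| ≤ M := by
      have := abs_nonneg (P (t • x) 1); have := abs_nonneg (P (t • x) Complex.I)
      have := abs_nonneg (Q (t • x) 1 1); have := abs_nonneg (Q (t • x) Complex.I 1)
      have := abs_nonneg (Q (t • x) Complex.I Complex.I); linarith
    have c5 : |Q (t • x) Complex.I 1| ≤ M := by
      have := abs_nonneg (P (t • x) 1); have := abs_nonneg (P (t • x) Complex.I)
      have := abs_nonneg (Q (t • x) 1 1); have := abs_nonneg (Q (t • x) 1 Complex.I)
      have := abs_nonneg (Q (t • x) Complex.I Complex.I); linarith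
    have c6 : |Q (t • x) Complex.I Complex.I| ≤ M := by
      have := abs_nonneg (P (t • x) 1); have := abs_nonneg (P (t • x) Complex.I)
      have := abs_nonneg (Q (t • x) 1 1); have := abs_nonneg (Q (t • x) 1 Complex.I)
      have := abs_nonneg (Q (t • x) Complex.I 1); linarith
    apply ContinuousLinearMap.opNorm_le_bound _ hC0
    intro w
    rw [hF'apply]
    have hwre : |w.re| ≤ ‖w‖ := by
      exact Complex.abs_re_le_norm w
    have hwim : |w.im| ≤ ‖w‖ := by
      exact Complex.abs_im_le_norm w
    have hxre : |x.re| ≤ r₁ := by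
      refine le_trans ?_ (hxnorm x hx)
      exact Complex.abs_re_le_norm x
    have hxim : |x.im| ≤ r₁ := by
      refine le_trans ?_ (hxnorm x hx)
      exact Complex.abs_im_le_norm x
    have hQdecw : ∀ b : ℂ, Q (t • x) w b
        = w.re * Q (t • x) 1 b + w.im * Q (t • x) Complex.I b := fun b => by
      rw [clm_decomp (Q (t • x)) w]; simp
    have hQwI : |Q (t • x) w Complex.I| ≤ 2 * M * ‖w‖ := by
      rw [hQdecw]
      refine le_trans (abs_add_le _ _) ?_
      rw [abs_mul, abs_mul]
      have m1 := mul_le_mul hwre c4 (abs_nonneg _) (norm_nonneg w)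
      have m2 := mul_le_mul hwim c6 (abs_nonneg _) (norm_nonneg w)
      calc |w.re| * |Q (t • x) 1 Complex.I| + |w.im| * |Q (t • x) Complex.I Complex.I|
          ≤ ‖w‖ * M + ‖w‖ * M := add_le_add m1 m2
        _ = 2 * M * ‖w‖ := by ring
    have hQw1 : |Q (t • x) w 1| ≤ 2 * M * ‖w‖ := by
      rw [hQdecw]
      refine le_trans (abs_add_le _ _) ?_
      rw [abs_mul, abs_mul]
      have m1 := mul_le_mul hwre c3 (abs_nonneg _) (norm_nonneg w)
      have m2 := mul_le_mul hwim c5 (abs_nonneg _) (norm_nonneg w)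
      calc |w.re| * |Q (t • x) 1 1| + |w.im| * |Q (t • x) Complex.I 1|
          ≤ ‖w‖ * M + ‖w‖ * M := add_le_add m1 m2
        _ = 2 * M * ‖w‖ := by ring
    have t4 : |(-(P (t • x) Complex.I) * w.re + (P (t • x) 1) * w.im
        + (t * x.re) * (-(Q (t • x) w Complex.I)) + (t * x.im) * (Q (t • x) w 1))|
        ≤ |P (t • x) Complex.I| * |w.re| + |P (t • x) 1| * |w.im|
          + |t| * |x.re| * |Q (t • x) w Complex.I| + |t| * |x.im| * |Q (t • x) w 1| := by
      refine le_trans (abs_add_le _ _) ?_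
      refine le_trans (add_le_add_left (le_trans (abs_add_le _ _)
        (add_le_add_left (abs_add_le _ _) _)) _) ?_
      simp only [abs_mul, abs_neg]
      apply le_of_eq; ring
    refine le_trans t4 ?_
    have b1 : |P (t • x) Complex.I| * |w.re| ≤ M * ‖w‖ :=
      mul_le_mul c2 hwre (abs_nonneg _) hM0
    have b2 : |P (t • x) 1| * |w.im| ≤ M * ‖w‖ :=
      mul_le_mul c1 hwim (abs_nonneg _) hM0
    have b3 : |t| * |x.re| * |Q (t • x) w Complex.I| ≤ 1 * r₁ * (2 * M * ‖w‖) := by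
      apply mul_le_mul _ hQwI (abs_nonneg _) (by positivity)
      exact mul_le_mul ht' hxre (abs_nonneg _) zero_le_one
    have b4 : |t| * |x.im| * |Q (t • x) w 1| ≤ 1 * r₁ * (2 * M * ‖w‖) := by
      apply mul_le_mul _ hQw1 (abs_nonneg _) (by positivity)
      exact mul_le_mul ht' hxim (abs_nonneg _) zero_le_one
    have : C * ‖w‖ = M * ‖w‖ + M * ‖w‖ + 1 * r₁ * (2 * M * ‖w‖) + 1 * r₁ * (2 * M * ‖w‖) := by
      simp only [hC]; ring
    rw [this]
    linarith
  have h_diff : ∀ᵐ t ∂(MeasureTheory.volume), t ∈ Set.uIoc (0:ℝ) 1 →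
      ∀ x ∈ ball z₀ ε, HasFDerivAt
        (fun z : ℂ => -(P (t • z) Complex.I) * z.re + (P (t • z) 1) * z.im) (F' x t) x := by
    refine MeasureTheory.ae_of_all _ (fun t ht x hx => ?_)
    rw [hIoc] at ht
    exact key t (abs_le.2 ⟨by linarith [ht.1], ht.2⟩) x hx
  have main := intervalIntegral.hasFDerivAt_integral_of_dominated_of_fderiv_le
    (𝕜 := ℝ) (ball_mem_nhds z₀ εpos) hF_meas hF_int hF'_meas h_bound intervalIntegrable_const h_diff
  have hintF' : (∫ t in (0:ℝ)..1, F' z₀ t) =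
      (-(P z₀ Complex.I)) • Complex.reCLM + (P z₀ 1) • Complex.imCLM := by
    apply ContinuousLinearMap.ext
    intro w
    have happ : (∫ t in (0:ℝ)..1, F' z₀ t) w = ∫ t in (0:ℝ)..1, F' z₀ t w := by
      rw [intervalIntegral.integral_of_le zero_le_one,
        intervalIntegral.integral_of_le zero_le_one]
      exact ContinuousLinearMap.integral_apply
        ((intervalIntegrable_iff_integrableOn_Ioc_of_le zero_le_one).1 hF'int) w
    rw [happ]
    have hder : ∀ t ∈ Set.uIcc (0:ℝ) 1, HasDerivAt
        (fun s : ℝ => s * (-(P (s • z₀) Complex.I) * w.re + (P (s • z₀) 1) * w.im))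
        (F' z₀ t w) t := by
      intro t ht
      rw [Set.uIcc_of_le zero_le_one] at ht
      have hpB : t • z₀ ∈ ball (0:ℂ) R :=
        hmemB z₀ hz₀r t (abs_le.2 ⟨by linarith [ht.1], ht.2⟩)
      have h0 : HasDerivAt (fun s : ℝ => s • z₀) z₀ t := by
        simpa using (hasDerivAt_id t).smul_const z₀
      have hq : HasDerivAt (fun s : ℝ => P (s • z₀)) (Q (t • z₀) z₀) t :=
        (Pdiff hu hpB).hasFDerivAt.comp_hasDerivAt t h0
      have hqI : HasDerivAt (fun s : ℝ => P (s • z₀) Complex.I) (Q (t • z₀) z₀ Complex.I) t :=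
        (ContinuousLinearMap.apply ℝ ℝ Complex.I).hasFDerivAt.comp_hasDerivAt t hq
      have hq1 : HasDerivAt (fun s : ℝ => P (s • z₀) 1) (Q (t • z₀) z₀ 1) t :=
        (ContinuousLinearMap.apply ℝ ℝ (1:ℂ)).hasFDerivAt.comp_hasDerivAt t hq
      have hin := (hqI.neg.mul_const w.re).add (hq1.mul_const w.im)
      have hfull := (hasDerivAt_id t).mul hin
      refine hfull.congr_deriv (Eq.symm ?_)
      rw [hF'apply]
      have hQdec : ∀ b : ℂ, Q (t • z₀) z₀ b
          = z₀.re * Q (t • z₀) 1 b + z₀.im * Q (t • z₀) Complex.I b := fun b => by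
        rw [clm_decomp (Q (t • z₀)) z₀]; simp
      have hQdecw : ∀ b : ℂ, Q (t • z₀) w b
          = w.re * Q (t • z₀) 1 b + w.im * Q (t • z₀) Complex.I b := fun b => by
        rw [clm_decomp (Q (t • z₀)) w]; simp
      have hlap := lap' hu hpB
      rw [hQdec Complex.I, hQdec 1, hQdecw Complex.I, hQdecw 1]
      simp only [id_eq, Pi.add_apply, Pi.neg_apply]
      linear_combination (t * (z₀.im * w.re - z₀.re * w.im)) * hlap
    have hcont' : IntervalIntegrable (fun t => F' z₀ t w) MeasureTheory.volume 0 1 := by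
      apply ContinuousOn.intervalIntegrable
      rw [Set.uIcc_of_le zero_le_one]
      exact (ContinuousLinearMap.apply ℝ ℝ w).continuous.comp_continuousOn hF'cont
    rw [intervalIntegral.integral_eq_sub_of_hasDerivAt hder hcont']
    simp [one_smul]
  rw [show hcV u = (fun x : ℂ => ∫ t in (0:ℝ)..1,
    (-(P (t • x) Complex.I) * x.re + (P (t • x) 1) * x.im)) from rfl]
  exact hintF' ▸ main

noncomputable def hcF (u : ℂ → ℝ) : ℂ → ℂ :=
  fun z => (u z : ℂ) + Complex.I * (hcV u z : ℂ)


lemma hcV_zero (u : ℂ → ℝ) : hcV u 0 = 0 := by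
  simp [hcV]

lemma hcF_re (z : ℂ) : (hcF u z).re = u z := by simp [hcF]

lemma hcF_im (z : ℂ) : (hcF u z).im = hcV u z := by simp [hcF]

lemma hcF_differentiableOn (hu : HarmonicOn u (ball (0:ℂ) R)) :
    DifferentiableOn ℂ (hcF u) (ball (0:ℂ) R) := by
  intro z hz
  apply DifferentiableAt.differentiableWithinAt
  have hv := hcV_hasFDerivAt hu hz
  have hu' := (udiff hu hz).hasFDerivAt
  have h1 : HasFDerivAt (fun z : ℂ => (u z : ℂ))
      (Complex.ofRealCLM.comp (fderiv ℝ u z)) z :=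
    Complex.ofRealCLM.hasFDerivAt.comp z hu'
  have h2 : HasFDerivAt (fun z : ℂ => (hcV u z : ℂ))
      (Complex.ofRealCLM.comp ((-(fderiv ℝ u z Complex.I)) • Complex.reCLM
        + (fderiv ℝ u z 1) • Complex.imCLM)) z :=
    Complex.ofRealCLM.hasFDerivAt.comp z hv
  have h3 := h1.add (h2.const_mul Complex.I)
  set c : ℂ := ((fderiv ℝ u z 1 : ℝ) : ℂ) - Complex.I * ((fderiv ℝ u z Complex.I : ℝ) : ℂ)
    with hc
  have H : (ContinuousLinearMap.smulRight (1 : ℂ →L[ℂ] ℂ) c).restrictScalars ℝ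
      = Complex.ofRealCLM.comp (fderiv ℝ u z)
        + Complex.I • (Complex.ofRealCLM.comp ((-(fderiv ℝ u z Complex.I)) • Complex.reCLM
          + (fderiv ℝ u z 1) • Complex.imCLM)) := by
    ext w
    simp only [ContinuousLinearMap.coe_restrictScalars', ContinuousLinearMap.smulRight_apply,
      ContinuousLinearMap.one_apply, ContinuousLinearMap.add_apply,
      ContinuousLinearMap.coe_comp', Function.comp_apply, ContinuousLinearMap.coe_smul',
      Pi.smul_apply, ContinuousLinearMap.smul_apply, ContinuousLinearMap.neg_apply,
      Complex.coe_smul]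
    rw [clm_decomp (fderiv ℝ u z) w]
    simp [hc, Complex.ext_iff, smul_eq_mul]
    first
    | (constructor <;> ring)
    | ring
  have h4 : HasFDerivAt (hcF u) (ContinuousLinearMap.smulRight (1 : ℂ →L[ℂ] ℂ) c) z :=
    hasFDerivAt_of_restrictScalars ℝ h3 H
  exact h4.differentiableAt

end

section
variable {f : ℂ → ℂ} {r : ℝ}

lemma circleMap_ne' (hr : 0 < r) (θ : ℝ) : circleMap 0 r θ ≠ 0 := by
  simp [circleMap, Complex.exp_ne_zero, hr.ne']

lemma circleMap_abs (hr : 0 < r) (θ : ℝ) : ‖circleMap 0 r θ‖ = r := by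
  simp [circleMap, abs_of_pos hr]

lemma circleMap_sub_ne (hr : 0 < r) {z : ℂ} (hz : z ∈ ball (0:ℂ) r) (θ : ℝ) :
    circleMap 0 r θ - z ≠ 0 := by
  intro h
  have h1 : ‖z‖ < r := by simpa [mem_ball_zero_iff] using hz
  have h2 : circleMap 0 r θ = z := sub_eq_zero.1 h
  rw [← h2, circleMap_abs hr] at h1
  exact lt_irrefl _ h1

/-- Cauchy integral formula on the circle, in interval-integral form -/
lemma circle_cauchy (hr : 0 < r) (hf : DiffContOnCl ℂ f (ball (0:ℂ) r)) {z : ℂ}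
    (hz : z ∈ ball (0:ℂ) r) :
    ∫ θ in (0:ℝ)..(2*π), circleMap 0 r θ / (circleMap 0 r θ - z) * f (circleMap 0 r θ)
      = 2 * π * f z := by
  have h := hf.circleIntegral_sub_inv_smul hz
  rw [circleIntegral] at h
  simp only [deriv_circleMap, smul_eq_mul] at h
  have h2 : ∫ θ in (0:ℝ)..(2*π),
      Complex.I * (circleMap 0 r θ / (circleMap 0 r θ - z) * f (circleMap 0 r θ))
      = 2 * π * Complex.I * f z := by
    rw [← h]
    apply intervalIntegral.integral_congr
    intro θ _
    field_simp
  rw [intervalIntegral.integral_const_mul] at h2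
  have hI : (Complex.I : ℂ) ≠ 0 := Complex.I_ne_zero
  apply mul_left_cancel₀ hI
  rw [h2]
  ring

end

lemma circle_mean {f : ℂ → ℂ} {r : ℝ} (hr : 0 < r) (hf : DiffContOnCl ℂ f (ball (0:ℂ) r)) :
    ∫ θ in (0:ℝ)..(2*π), f (circleMap 0 r θ) = 2 * (π:ℂ) * f 0 := by
  rw [← circle_cauchy hr hf (mem_ball_self hr)]
  apply intervalIntegral.integral_congr
  intro θ _
  simp only [sub_zero, div_self (circleMap_ne' hr θ), one_mul]

lemma circle_refl {f : ℂ → ℂ} {r : ℝ} (hr : 0 < r) (hf : DiffContOnCl ℂ f (ball (0:ℂ) r))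
    (hfc : ContinuousOn f (closedBall (0:ℂ) r)) {z : ℂ} (hz : z ∈ ball (0:ℂ) r) :
    ∫ θ in (0:ℝ)..(2*π), f (circleMap 0 r θ) *
      (((r:ℂ)^2 + (starRingEnd ℂ) z * circleMap 0 r θ)
        / ((r:ℂ)^2 - (starRingEnd ℂ) z * circleMap 0 r θ))
      = 2 * (π:ℂ) * f 0 := by
  have hzr : ‖z‖ < r := by
    exact mem_ball_zero_iff.1 hz
  have hden : ∀ w : ℂ, ‖w‖ ≤ r → ((r:ℂ)^2 - (starRingEnd ℂ) z * w) ≠ 0 := by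
    intro w hw heq
    have h2 := congrArg (‖·‖) (sub_eq_zero.1 heq)
    simp only [norm_mul, norm_pow, Complex.norm_conj, Complex.norm_real, Real.norm_of_nonneg hr.le] at h2
    nlinarith [norm_nonneg w, norm_nonneg z]
  set H : ℂ → ℂ := fun w => f w * (((r:ℂ)^2 + (starRingEnd ℂ) z * w)
    / ((r:ℂ)^2 - (starRingEnd ℂ) z * w)) with hH
  have hHd : DiffContOnCl ℂ H (ball (0:ℂ) r) := by
    constructor
    · apply DifferentiableOn.mul hf.differentiableOn
      apply DifferentiableOn.div
      · exact (differentiableOn_const _).add ((differentiableOn_const _).mul differentiableOn_id)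
      · exact (differentiableOn_const _).sub ((differentiableOn_const _).mul differentiableOn_id)
      · intro w hw
        exact hden w (le_of_lt (by exact mem_ball_zero_iff.1 hw))
    · rw [closure_ball 0 hr.ne']
      apply ContinuousOn.mul hfc
      apply ContinuousOn.div
      · exact (continuousOn_const).add ((continuousOn_const).mul continuousOn_id)
      · exact (continuousOn_const).sub ((continuousOn_const).mul continuousOn_id)
      · intro w hw
        exact hden w (by exact mem_closedBall_zero_iff.1 hw)
  have hmean := circle_mean hr hHd
  have hH0 : H 0 = f 0 := by
    have hne : ((r:ℂ)^2 : ℂ) ≠ 0 := pow_ne_zero 2 (by exact_mod_cast hr.ne')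
    simp only [hH, mul_zero, add_zero, sub_zero, div_self hne, mul_one]
  rw [hH0] at hmean
  exact hmean

lemma conj_circleMap' {r : ℝ} (hr : 0 < r) (θ : ℝ) :
    (starRingEnd ℂ) (circleMap 0 r θ) = (r:ℂ)^2 / circleMap 0 r θ := by
  rw [eq_div_iff (circleMap_ne' hr θ), mul_comm, Complex.mul_conj, Complex.normSq_eq_norm_sq,
    circleMap_abs hr]
  push_cast
  ring

/-- Schwarz integral formula -/
lemma schwarz {f : ℂ → ℂ} {R r : ℝ} (hr : 0 < r) (hrR : r < R)
    (hf : DifferentiableOn ℂ f (ball (0:ℂ) R)) (h0 : (f 0).im = 0) {z : ℂ}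
    (hz : z ∈ ball (0:ℂ) r) :
    ∫ θ in (0:ℝ)..(2*π), (((f (circleMap 0 r θ)).re : ℂ) *
      ((circleMap 0 r θ + z) / (circleMap 0 r θ - z)))
      = 2 * π * f z := by
  have hcb : closedBall (0:ℂ) r ⊆ ball (0:ℂ) R := closedBall_subset_ball hrR
  have hball : ball (0:ℂ) r ⊆ ball (0:ℂ) R := ball_subset_ball hrR.le
  have hfc : ContinuousOn f (closedBall (0:ℂ) r) := hf.continuousOn.mono hcb
  have hdc : DiffContOnCl ℂ f (ball (0:ℂ) r) :=
    ⟨hf.mono hball, by rw [closure_ball 0 hr.ne']; exact hfc⟩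
  have hcont1 : Continuous (fun θ : ℝ => f (circleMap 0 r θ)) :=
    hfc.comp_continuous (continuous_circleMap 0 r) (fun θ => circleMap_mem_closedBall 0 hr.le θ)
  have hsubne : ∀ θ : ℝ, circleMap 0 r θ - z ≠ 0 := circleMap_sub_ne hr hz
  have hcontK : Continuous (fun θ : ℝ => (circleMap 0 r θ + z) / (circleMap 0 r θ - z)) :=
    Continuous.div ((continuous_circleMap 0 r).add continuous_const)
      ((continuous_circleMap 0 r).sub continuous_const) hsubne
  have hcontC : Continuous (fun θ : ℝ => circleMap 0 r θ / (circleMap 0 r θ - z)) :=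
    Continuous.div (continuous_circleMap 0 r)
      ((continuous_circleMap 0 r).sub continuous_const) hsubne
  -- E1
  have E1 : ∫ θ in (0:ℝ)..(2*π), f (circleMap 0 r θ) *
      ((circleMap 0 r θ + z) / (circleMap 0 r θ - z))
      = 2 * (2 * π * f z) - 2 * π * f 0 := by
    have hpt : ∀ θ : ℝ, f (circleMap 0 r θ) * ((circleMap 0 r θ + z) / (circleMap 0 r θ - z))
        = 2 * (circleMap 0 r θ / (circleMap 0 r θ - z) * f (circleMap 0 r θ))
          - f (circleMap 0 r θ) := by
      intro θ
      field_simp [hsubne θ]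
      ring
    rw [intervalIntegral.integral_congr (g := fun θ : ℝ =>
      2 * (circleMap 0 r θ / (circleMap 0 r θ - z) * f (circleMap 0 r θ))
        - f (circleMap 0 r θ)) (fun θ _ => hpt θ)]
    rw [intervalIntegral.integral_sub (f := fun θ : ℝ =>
      2 * (circleMap 0 r θ / (circleMap 0 r θ - z) * f (circleMap 0 r θ)))
      (g := fun θ : ℝ => f (circleMap 0 r θ)) ((continuous_const.mul (hcontC.mul hcont1)).intervalIntegrable _ _)
      (hcont1.intervalIntegrable _ _)]
    rw [intervalIntegral.integral_const_mul]
    rw [circle_cauchy hr hdc hz, circle_mean hr hdc]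
  -- E2
  have E2 : ∫ θ in (0:ℝ)..(2*π), (starRingEnd ℂ) (f (circleMap 0 r θ)) *
      ((circleMap 0 r θ + z) / (circleMap 0 r θ - z))
      = 2 * (π:ℂ) * (starRingEnd ℂ) (f 0) := by
    have hpt : ∀ θ : ℝ, (starRingEnd ℂ) (f (circleMap 0 r θ)) *
        ((circleMap 0 r θ + z) / (circleMap 0 r θ - z))
        = (starRingEnd ℂ) (f (circleMap 0 r θ) *
          (((r:ℂ)^2 + (starRingEnd ℂ) z * circleMap 0 r θ)
            / ((r:ℂ)^2 - (starRingEnd ℂ) z * circleMap 0 r θ))) := by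
      intro θ
      rw [map_mul]
      congr 1
      simp only [map_div₀, map_add, map_sub, map_mul, map_pow, Complex.conj_conj,
        Complex.conj_ofReal]
      rw [conj_circleMap' hr θ]
      have hc := circleMap_ne' hr θ
      have hr2 : ((r:ℂ)^2) ≠ 0 := pow_ne_zero 2 (by exact_mod_cast hr.ne')
      have hden : (r:ℂ)^2 - z * ((r:ℂ)^2 / circleMap 0 r θ) ≠ 0 := by
        rw [show (r:ℂ)^2 - z * ((r:ℂ)^2 / circleMap 0 r θ)
          = (r:ℂ)^2 * (circleMap 0 r θ - z) / circleMap 0 r θ by field_simp]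
        exact div_ne_zero (mul_ne_zero hr2 (hsubne θ)) hc
      rw [div_eq_div_iff (hsubne θ) hden]
      field_simp
    rw [intervalIntegral.integral_congr (g := fun θ : ℝ => (starRingEnd ℂ)
      (f (circleMap 0 r θ) * (((r:ℂ)^2 + (starRingEnd ℂ) z * circleMap 0 r θ)
        / ((r:ℂ)^2 - (starRingEnd ℂ) z * circleMap 0 r θ)))) (fun θ _ => hpt θ)]
    have hint : IntervalIntegrable (fun θ : ℝ => f (circleMap 0 r θ) *
        (((r:ℂ)^2 + (starRingEnd ℂ) z * circleMap 0 r θ)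
          / ((r:ℂ)^2 - (starRingEnd ℂ) z * circleMap 0 r θ))) MeasureTheory.volume 0 (2*π) := by
      apply Continuous.intervalIntegrable
      apply hcont1.mul
      apply Continuous.div
      · exact continuous_const.add (continuous_const.mul (continuous_circleMap 0 r))
      · exact continuous_const.sub (continuous_const.mul (continuous_circleMap 0 r))
      · intro θ
        -- denominator nonzero
        intro heq
        have hzr : ‖z‖ < r := by
          exact mem_ball_zero_iff.1 hz
        have h2 := congrArg (‖·‖) (sub_eq_zero.1 heq)
        simp only [norm_mul, norm_pow, Complex.norm_conj, Complex.norm_real,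
          Real.norm_of_nonneg hr.le, circleMap_abs hr] at h2
        nlinarith [norm_nonneg z]
    have hcc := (Complex.conjCLE : ℂ ≃L[ℝ] ℂ).toContinuousLinearMap.intervalIntegral_comp_comm hint
    have : (Complex.conjCLE : ℂ ≃L[ℝ] ℂ).toContinuousLinearMap = Complex.conjCLE.toContinuousLinearMap := rfl
    rw [show ((Complex.conjCLE : ℂ ≃L[ℝ] ℂ).toContinuousLinearMap : ℂ → ℂ) = (starRingEnd ℂ) from rfl] at hcc
    rw [hcc, circle_refl hr hdc hfc hz]
    rw [map_mul]
    congr 1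
    · simp [Complex.ext_iff]
  -- combine
  have E3 : ∀ θ : ℝ, (((f (circleMap 0 r θ)).re : ℂ) : ℂ) * 2
      = f (circleMap 0 r θ) + (starRingEnd ℂ) (f (circleMap 0 r θ)) := by
    intro θ
    rw [Complex.add_conj]
    push_cast
    ring
  have hconj0 : (starRingEnd ℂ) (f 0) = f 0 := Complex.conj_eq_iff_im.2 h0
  have hfin : (∫ θ in (0:ℝ)..(2*π), (((f (circleMap 0 r θ)).re : ℂ) *
      ((circleMap 0 r θ + z) / (circleMap 0 r θ - z)))) * 2
      = 2 * (2 * π * f z) := by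
    have hcontre : Continuous (fun θ : ℝ => ((f (circleMap 0 r θ)).re : ℂ)) :=
      Complex.continuous_ofReal.comp (Complex.continuous_re.comp hcont1)
    rw [← intervalIntegral.integral_mul_const]
    have hpt : ∀ θ : ℝ, (((f (circleMap 0 r θ)).re : ℂ) *
        ((circleMap 0 r θ + z) / (circleMap 0 r θ - z))) * 2
        = f (circleMap 0 r θ) * ((circleMap 0 r θ + z) / (circleMap 0 r θ - z))
          + (starRingEnd ℂ) (f (circleMap 0 r θ)) *
            ((circleMap 0 r θ + z) / (circleMap 0 r θ - z)) := by
      intro θ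
      rw [← add_mul, ← E3 θ]
      ring
    rw [intervalIntegral.integral_congr (g := fun θ : ℝ =>
      f (circleMap 0 r θ) * ((circleMap 0 r θ + z) / (circleMap 0 r θ - z))
        + (starRingEnd ℂ) (f (circleMap 0 r θ)) *
          ((circleMap 0 r θ + z) / (circleMap 0 r θ - z))) (fun θ _ => hpt θ)]
    have hconjc : Continuous (fun θ : ℝ => (starRingEnd ℂ) (f (circleMap 0 r θ))) :=
      Complex.continuous_conj.comp hcont1
    rw [intervalIntegral.integral_add (f := fun θ : ℝ =>
      f (circleMap 0 r θ) * ((circleMap 0 r θ + z) / (circleMap 0 r θ - z)))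
      (g := fun θ : ℝ => (starRingEnd ℂ) (f (circleMap 0 r θ)) *
        ((circleMap 0 r θ + z) / (circleMap 0 r θ - z))) ((hcont1.mul hcontK).intervalIntegrable _ _)
      ((hconjc.mul hcontK).intervalIntegrable _ _)]
    rw [E1, E2, hconj0]
    ring
  have := congrArg (fun w : ℂ => w / 2) hfin
  simpa using this

theorem harmonic_conjugate_integral_formula
    (u : ℂ → ℝ) (R r : ℝ) (hr : 0 < r) (hrR : r < R)
    (hu : HarmonicOn u (ball (0:ℂ) R)) :
    DifferentiableOn ℂ (fun z => (u z : ℂ) + Complex.I * (conjInt u r z : ℂ))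
      (ball (0:ℂ) r) ∧ conjInt u r 0 = 0 := by
  have hπ : (0:ℝ) < Real.pi := Real.pi_pos
  constructor
  · -- main part
    set f := hcF u with hf
    have hfd : DifferentiableOn ℂ f (ball (0:ℂ) R) := hcF_differentiableOn hu
    have h0im : (f 0).im = 0 := by rw [hf, hcF_im (u := u)]; exact hcV_zero u
    have key : ∀ z ∈ ball (0:ℂ) r, conjInt u r z = (f z).im := by
      intro z hz
      have hs := schwarz hr hrR hfd h0im hz
      have hcm : ∀ θ : ℝ, circleMap 0 r θ = (r:ℂ) * Complex.exp ((θ:ℂ) * Complex.I) := by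
        intro θ; simp [circleMap]
      -- pointwise imaginary part identity
      have hpt : ∀ θ : ℝ,
          u ((r:ℂ) * Complex.exp ((θ:ℂ) * Complex.I)) *
            (2 * r * (Complex.exp (-(θ:ℂ) * Complex.I) * z).im) /
              (‖((r:ℂ) * Complex.exp ((θ:ℂ) * Complex.I) - z)‖) ^ 2
          = ((((f (circleMap 0 r θ)).re : ℂ) *
              ((circleMap 0 r θ + z) / (circleMap 0 r θ - z))).im) := by
        intro θ
        have hv := circleMap_sub_ne hr hz θ
        have hexp : Complex.exp (-(θ:ℂ) * Complex.I)
            = (starRingEnd ℂ) (Complex.exp ((θ:ℂ) * Complex.I)) := by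
          rw [← Complex.exp_conj]; congr 1; simp
        rw [hcF_re (u := u), hcm θ]
        rw [hcm θ] at hv
        have hnS : Complex.normSq ((r:ℂ) * Complex.exp ((θ:ℂ) * Complex.I) - z) ≠ 0 := by
          rw [Complex.normSq_eq_norm_sq]
          exact pow_ne_zero 2 (norm_ne_zero_iff.mpr hv)
        have him : (((u ((r:ℂ) * Complex.exp ((θ:ℂ) * Complex.I)) : ℝ) : ℂ) *
            (((r:ℂ) * Complex.exp ((θ:ℂ) * Complex.I) + z)
              / ((r:ℂ) * Complex.exp ((θ:ℂ) * Complex.I) - z))).im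
            = u ((r:ℂ) * Complex.exp ((θ:ℂ) * Complex.I)) *
              (((r:ℂ) * Complex.exp ((θ:ℂ) * Complex.I) + z)
                / ((r:ℂ) * Complex.exp ((θ:ℂ) * Complex.I) - z)).im := by
          simp [Complex.mul_im]
        rw [him, Complex.div_im, hexp]
        rw [show ‖((r:ℂ) * Complex.exp ((θ:ℂ) * Complex.I) - z)‖ ^ 2
          = Complex.normSq ((r:ℂ) * Complex.exp ((θ:ℂ) * Complex.I) - z)
          from Complex.sq_norm _]
        simp only [Complex.mul_im, Complex.mul_re, Complex.add_re, Complex.add_im,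
          Complex.sub_re, Complex.sub_im, Complex.conj_re, Complex.conj_im,
          Complex.ofReal_re, Complex.ofReal_im]
        simp only [← sub_div]
        rw [mul_div_assoc]
        congr 2
        ring
      have hiim : (∫ θ in (0:ℝ)..(2*π), (((f (circleMap 0 r θ)).re : ℂ) *
          ((circleMap 0 r θ + z) / (circleMap 0 r θ - z)))).im
          = ∫ θ in (0:ℝ)..(2*π), ((((f (circleMap 0 r θ)).re : ℂ) *
            ((circleMap 0 r θ + z) / (circleMap 0 r θ - z))).im) := by
        have hcb : closedBall (0:ℂ) r ⊆ ball (0:ℂ) R := closedBall_subset_ball hrR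
        have hfc : ContinuousOn f (closedBall (0:ℂ) r) := hfd.continuousOn.mono hcb
        have hcont1 : Continuous (fun θ : ℝ => f (circleMap 0 r θ)) :=
          hfc.comp_continuous (continuous_circleMap 0 r)
            (fun θ => circleMap_mem_closedBall 0 hr.le θ)
        have hcontK : Continuous (fun θ : ℝ =>
            (circleMap 0 r θ + z) / (circleMap 0 r θ - z)) :=
          Continuous.div ((continuous_circleMap 0 r).add continuous_const)
            ((continuous_circleMap 0 r).sub continuous_const) (circleMap_sub_ne hr hz)
        have hint : IntervalIntegrable (fun θ : ℝ => (((f (circleMap 0 r θ)).re : ℂ) *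
            ((circleMap 0 r θ + z) / (circleMap 0 r θ - z)))) MeasureTheory.volume 0 (2*π) :=
          ((Complex.continuous_ofReal.comp (Complex.continuous_re.comp hcont1)).mul
            hcontK).intervalIntegrable _ _
        exact (Complex.imCLM.intervalIntegral_comp_comm hint).symm
      rw [conjInt]
      calc (1 / (2 * Real.pi)) * ∫ θ in (0:ℝ)..(2 * Real.pi),
            u ((r:ℂ) * Complex.exp ((θ:ℂ) * Complex.I)) *
              (2 * r * (Complex.exp (-(θ:ℂ) * Complex.I) * z).im) /
                (‖((r:ℂ) * Complex.exp ((θ:ℂ) * Complex.I) - z)‖) ^ 2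
          = (1 / (2 * Real.pi)) * ∫ θ in (0:ℝ)..(2*π), ((((f (circleMap 0 r θ)).re : ℂ) *
              ((circleMap 0 r θ + z) / (circleMap 0 r θ - z))).im) := by
            rw [intervalIntegral.integral_congr (fun θ _ => hpt θ)]
        _ = (1 / (2 * Real.pi)) * ((2 * (π:ℂ) * f z).im) := by
            rw [← hiim, hs]
        _ = (f z).im := by
            have : (2 * (π:ℂ) * f z).im = 2 * Real.pi * (f z).im := by
              simp [Complex.mul_im]
            rw [this]
            field_simp
    apply DifferentiableOn.congr ((hfd.mono (ball_subset_ball hrR.le)))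
    intro z hz
    rw [key z hz]
    have h1 : (f z).re = u z := hcF_re (u := u) z
    rw [← h1, mul_comm Complex.I]
    exact Complex.re_add_im (f z)
  · simp [conjInt]
end

section
/- Two annuli A(r₁, R₁) = {z : r₁ < |z| < R₁} and A(r₂, R₂) = {z : r₂ < |z| < R₂} with 0 < rᵢ < Rᵢ < ∞ are conformally equivalent (i.e., there exists a bijective holomorphic map between them) only if R₁/r₁ = R₂/r₂. -/
/-
A holomorphic bijection `f` between the annuli is a homeomorphism (open mapping theorem), hence
proper: at each boundary circle of `A(r₁, R₁)` the modulus `‖f z‖` tends to `r₂` or to `R₂`.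
Hadamard's three circles theorem, applied to `f` and to `1 / f`, then makes `log ‖f z‖` an affine
function `α + s log ‖z‖` of `log ‖z‖`. Locally `f(z) z^(-s)` has constant modulus, so it is
constant and `z f' = s f`; on a circle `f` is therefore `c e^{isθ}`, which is injective only if
`|s| = 1`. As `s` is `0` or `±(log R₂ - log r₂) / (log R₁ - log r₁)`, the moduli agree.
-/

open Filter Metric Real Set Topology

theorem Filter.HasBasis.tendsto_nhds_or_of_isPreconnected {X ι : Type*} [TopologicalSpace X]
    {l : Filter X} {p : ι → Prop} {s : ι → Set X} (hl : l.HasBasis p s) {φ : X → ℝ}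
    (hs : ∀ i, p i → IsPreconnected (s i) ∧ ContinuousOn φ (s i)) {a b : ℝ} (hab : a < b)
    (h : Tendsto φ l (𝓝[>] a ⊔ 𝓝[<] b)) : Tendsto φ l (𝓝 a) ∨ Tendsto φ l (𝓝 b) := by
  set c := (a + b) / 2
  have hac : a < c := by simp only [c]; linarith
  have hcb : c < b := by simp only [c]; linarith
  have hsplit : Iio c ∪ Ioi c ∈ 𝓝[>] a ⊔ 𝓝[<] b :=
    ⟨mem_nhdsWithin_of_mem_nhds (mem_of_superset (Iio_mem_nhds hac) subset_union_left),
      mem_nhdsWithin_of_mem_nhds (mem_of_superset (Ioi_mem_nhds hcb) subset_union_right)⟩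
  have hside : ∀ {F G : Filter ℝ} {S : Set ℝ}, Tendsto φ l (F ⊔ G) →
      (∃ i, p i ∧ φ '' s i ⊆ S) → Sᶜ ∈ G → Tendsto φ l F := by
    rintro F G S hFG ⟨i, hi, hiS⟩ hSG
    refine (tendsto_inf.2 ⟨hFG, tendsto_principal.2
      (hl.eventually_iff.2 ⟨i, hi, fun x hx => hiS ⟨x, hx, rfl⟩⟩)⟩).mono_right ?_
    rw [inf_sup_right, inf_principal_eq_bot.2 hSG, sup_bot_eq]
    exact inf_le_left
  obtain ⟨i, hi, hsi⟩ := hl.mem_iff.1 (h hsplit)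
  obtain ⟨hconn, hφ⟩ := hs i hi
  rcases (hconn.image φ hφ).subset_or_subset isOpen_Iio isOpen_Ioi
      (disjoint_left.2 fun x hx₁ hx₂ => lt_asymm hx₁ hx₂) (image_subset_iff.2 hsi) with hlo | hhi
  · refine Or.inl ((hside h ⟨i, hi, hlo⟩ (mem_nhdsWithin_of_mem_nhds ?_)).mono_right
      nhdsWithin_le_nhds)
    simpa using Ici_mem_nhds hcb
  · refine Or.inr ((hside (h.mono_right (sup_comm _ _).le) ⟨i, hi, hhi⟩
      (mem_nhdsWithin_of_mem_nhds ?_)).mono_right nhdsWithin_le_nhds)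
    simpa using Iic_mem_nhds hac

theorem Filter.Tendsto.eventually_le_exp_log_add {X : Type*} {l : Filter X} {φ : X → ℝ} {a : ℝ}
    (h : Tendsto φ l (𝓝 a)) (ha : 0 < a) {ε : ℝ} (hε : 0 < ε) :
    ∀ᶠ x in l, φ x ≤ Real.exp (Real.log a + ε) := by
  refine h.eventually (ge_mem_nhds ?_)
  rw [Real.exp_add, Real.exp_log ha]
  exact lt_mul_of_one_lt_right ha (Real.one_lt_exp_iff.2 hε)

theorem continuousOn_invFunOn_of_isOpen_image {X Y : Type*} [TopologicalSpace X]
    [TopologicalSpace Y] [Nonempty X] {f : X → Y} {s : Set X} {t : Set Y} (hf : BijOn f s t)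
    (hs : IsOpen s) (hopen : ∀ u ⊆ s, IsOpen u → IsOpen (f '' u)) :
    ContinuousOn (Function.invFunOn f s) t := by
  refine continuousOn_iff'.2 fun u hu => ⟨f '' (u ∩ s), hopen _ inter_subset_right
    (hu.inter hs), ?_⟩
  ext w
  constructor
  · rintro ⟨hwu, hwt⟩
    exact ⟨⟨Function.invFunOn f s w, ⟨hwu, hf.surjOn.mapsTo_invFunOn hwt⟩,
      hf.invOn_invFunOn.2 hwt⟩, hwt⟩
  · rintro ⟨⟨z, ⟨hzu, hzs⟩, rfl⟩, hwt⟩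
    exact ⟨by rwa [mem_preimage, hf.invOn_invFunOn.1 hzs], hwt⟩

theorem DifferentiableOn.continuousOn_invFunOn {U V : Set ℂ} {f : ℂ → ℂ}
    (hf : DifferentiableOn ℂ f U) (hU : IsOpen U) (hU' : IsPreconnected U) (hbij : BijOn f U V)
    (hV : V.Nontrivial) : ContinuousOn (Function.invFunOn f U) V := by
  refine continuousOn_invFunOn_of_isOpen_image hbij hU ?_
  refine ((hf.analyticOnNhd hU).is_constant_or_isOpen hU').resolve_left ?_
  rintro ⟨w, hw⟩
  obtain ⟨_, hx, _, hy, hxy⟩ := hV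
  obtain ⟨z, hz, rfl⟩ := hbij.surjOn hx
  obtain ⟨z', hz', rfl⟩ := hbij.surjOn hy
  exact hxy ((hw z hz).trans (hw z' hz').symm)

theorem eq_mul_cexp_of_hasDerivAt {c : ℝ → ℂ} (k : ℂ) (hc : ∀ θ, HasDerivAt c (k * c θ) θ)
    (θ : ℝ) : c θ = c 0 * Complex.exp (k * θ) := by
  have hq : ∀ θ : ℝ, HasDerivAt (fun θ : ℝ => c θ * Complex.exp (-k * θ)) 0 θ := fun θ =>
    ((hc θ).mul ((hasDerivAt_id' θ).ofReal_comp.const_mul (-k)).cexp).congr_deriv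
      (by push_cast; ring)
  have := is_const_of_deriv_eq_zero (fun θ => (hq θ).differentiableAt) (fun θ => (hq θ).deriv) θ 0
  simp only [Complex.ofReal_zero, mul_zero, Complex.exp_zero, mul_one] at this
  rw [← this, mul_assoc, ← Complex.exp_add]
  simp

theorem abs_eq_one_of_cexp_two_pi {s : ℝ} (h2π : Complex.exp (Complex.I * s * (2 * π : ℝ)) = 1)
    (hne : ∀ θ ∈ Ioo 0 (2 * π), Complex.exp (Complex.I * s * θ) ≠ 1) : |s| = 1 := by
  obtain ⟨n, hn⟩ := Complex.exp_eq_one_iff.1 h2π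
  have hsn : s = n := by
    have : ((s : ℂ) - n) * (2 * π * Complex.I) = 0 := by push_cast at hn ⊢; linear_combination hn
    have : (s : ℂ) = n := by simpa [sub_eq_zero, pi_ne_zero, Complex.I_ne_zero] using this
    exact_mod_cast this
  by_contra h1
  have hn1 : |n| ≠ 1 := by rw [hsn, ← Int.cast_abs] at h1; exact_mod_cast h1
  have : n = 0 ∨ 2 ≤ |n| := by
    rcases le_or_gt 0 n with h | h
    · rw [abs_of_nonneg h] at hn1 ⊢; omega
    · rw [abs_of_neg h] at hn1 ⊢; omega
  rcases this with h0 | h2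
  · exact hne π ⟨pi_pos, by linarith [pi_pos]⟩ (by simp [hsn, h0])
  · have h2' : (2 : ℝ) ≤ |s| := by rw [hsn, ← Int.cast_abs]; exact_mod_cast h2
    have hs0 : (s : ℂ) ≠ 0 := by exact_mod_cast abs_pos.1 (by linarith : 0 < |s|)
    refine hne (2 * π / |s|) ⟨by positivity, div_lt_self (by positivity) (by linarith)⟩ ?_
    rcases abs_choice s with h | h <;> rw [h] <;> push_cast
    · rw [show Complex.I * s * (2 * π / s) = 2 * π * Complex.I by field_simp]
      exact Complex.exp_two_pi_mul_I
    · rw [show Complex.I * s * (2 * π / -s) = (-1 : ℤ) * (2 * π * Complex.I) by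
        push_cast; field_simp]
      exact Complex.exp_int_mul_two_pi_mul_I _

def annulus (r R : ℝ) : Set ℂ := norm ⁻¹' Ioo r R

section Annulus

variable {r R r' R' : ℝ}

theorem isOpen_annulus : IsOpen (annulus r R) :=
  isOpen_Ioo.preimage continuous_norm

theorem isPreconnected_annulus (hr : 0 ≤ r) : IsPreconnected (annulus r R) := by
  have : annulus r R =
      (fun p : ℝ × ℝ => (p.1 : ℂ) * Complex.exp (p.2 * Complex.I)) '' (Ioo r R ×ˢ univ) := by
    ext z
    constructor
    · intro hz
      exact ⟨(‖z‖, z.arg), ⟨hz, trivial⟩, Complex.norm_mul_exp_arg_mul_I z⟩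
    · rintro ⟨⟨ρ, θ⟩, ⟨hρ, -⟩, rfl⟩
      simpa [annulus, Complex.norm_exp_ofReal_mul_I, abs_of_pos (hr.trans_lt hρ.1)] using hρ
  rw [this]
  exact (isPreconnected_Ioo.prod isPreconnected_univ).image _ (by fun_prop)

theorem annulus_nontrivial (hr : 0 ≤ r) (hrR : r < R) : (annulus r R).Nontrivial := by
  set m := (r + R) / 2
  have hm0 : 0 < m := by simp only [m]; linarith
  have hm : ‖(m : ℂ)‖ = m := Complex.norm_of_nonneg hm0.le
  refine ⟨m, ?_, -m, ?_, ?_⟩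
  · simp only [annulus, mem_preimage, hm, mem_Ioo, m]; constructor <;> linarith
  · simp only [annulus, mem_preimage, norm_neg, hm, mem_Ioo, m]; constructor <;> linarith
  · have : (m : ℂ) ≠ 0 := by exact_mod_cast hm0.ne'
    exact fun h => this (by linear_combination h / 2)

theorem isCompact_norm_preimage_Icc (u v : ℝ) : IsCompact (norm ⁻¹' Icc u v : Set ℂ) :=
  isCompact_of_isClosed_isBounded (isClosed_Icc.preimage continuous_norm)
    (isBounded_closedBall (x := 0) (r := v) |>.subset fun z hz => by simpa using hz.2)

theorem hasBasis_comap_norm_nhdsGT (hrR : r < R) :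
    (comap norm (𝓝[>] r)).HasBasis (fun u => r < u ∧ u ≤ R) (annulus r ·) :=
  ((nhdsGT_basis r).restrict fun u hu => ⟨min u R, lt_min hu hrR, min_le_right _ _,
    Ioo_subset_Ioo_right (min_le_left _ _)⟩).comap _

theorem hasBasis_comap_norm_nhdsLT (hrR : r < R) :
    (comap norm (𝓝[<] R)).HasBasis (fun v => v < R ∧ r ≤ v) (annulus · R) :=
  ((nhdsLT_basis R).restrict fun v hv => ⟨max v r, max_lt hv hrR, le_max_right _ _,
    Ioo_subset_Ioo_left (le_max_left _ _)⟩).comap _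

theorem eventually_mem_annulus_notMem_of_isCompact (hrR : r < R) {K : Set ℂ}
    (hK : IsCompact K) (hKA : K ⊆ annulus r R) :
    ∀ᶠ z in comap norm (𝓝[>] r ⊔ 𝓝[<] R), z ∈ annulus r R ∧ z ∉ K := by
  have hK' : IsClosed (norm '' K) := (hK.image continuous_norm).isClosed
  have hr : (norm '' K)ᶜ ∈ 𝓝 r := hK'.isOpen_compl.mem_nhds fun ⟨z, hz, hzr⟩ =>
    (hKA hz).1.ne' hzr
  have hR : (norm '' K)ᶜ ∈ 𝓝 R := hK'.isOpen_compl.mem_nhds fun ⟨z, hz, hzR⟩ =>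
    (hKA hz).2.ne hzR
  have : ∀ᶠ x in 𝓝[>] r ⊔ 𝓝[<] R, x ∈ Ioo r R ∧ x ∉ norm '' K :=
    eventually_sup.2 ⟨inter_mem (Ioo_mem_nhdsGT hrR) (mem_nhdsWithin_of_mem_nhds hr),
      inter_mem (Ioo_mem_nhdsLT hrR) (mem_nhdsWithin_of_mem_nhds hR)⟩
  exact (this.comap norm).mono fun z hz => ⟨hz.1, fun hzK => hz.2 ⟨z, hzK, rfl⟩⟩

theorem tendsto_norm_comap_norm_of_leftInvOn {f g : ℂ → ℂ} (hrR : r < R)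
    (hg : ContinuousOn g (annulus r' R')) (hgA : MapsTo g (annulus r' R') (annulus r R))
    (hfA : MapsTo f (annulus r R) (annulus r' R')) (hgf : LeftInvOn g f (annulus r R)) :
    Tendsto (fun z => ‖f z‖) (comap norm (𝓝[>] r ⊔ 𝓝[<] R)) (𝓝[>] r' ⊔ 𝓝[<] R') := by
  refine ((nhdsGT_basis r').sup (nhdsLT_basis R')).tendsto_right_iff.2 ?_
  rintro ⟨u, v⟩ ⟨hu, hv⟩
  set K : Set ℂ := norm ⁻¹' Icc u v
  have hKA : K ⊆ annulus r' R' := fun w hw => ⟨hu.trans_le hw.1, hw.2.trans_lt hv⟩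
  have hgK : IsCompact (g '' K) :=
    (isCompact_norm_preimage_Icc u v).image_of_continuousOn (hg.mono hKA)
  filter_upwards [eventually_mem_annulus_notMem_of_isCompact hrR hgK
    (image_subset_iff.2 fun w hw => hgA (hKA hw))] with z ⟨hzA, hzK⟩
  have hfz := hfA hzA
  by_contra hfz'
  refine hzK ⟨f z, ⟨le_of_not_gt fun h => hfz' (Or.inl ⟨hfz.1, h⟩),
    le_of_not_gt fun h => hfz' (Or.inr ⟨h, hfz.2⟩)⟩, hgf hzA⟩

end Annulus

theorem exists_tendsto_norm_of_bijOn {f : ℂ → ℂ} {r₁ R₁ r₂ R₂ : ℝ}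
    (h₁ : 0 ≤ r₁) (h₁' : r₁ < R₁) (h₂ : 0 ≤ r₂) (h₂' : r₂ < R₂)
    (hf : DifferentiableOn ℂ f (annulus r₁ R₁))
    (hbij : BijOn f (annulus r₁ R₁) (annulus r₂ R₂)) :
    (∃ a ∈ ({r₂, R₂} : Set ℝ), Tendsto (fun z => ‖f z‖) (comap norm (𝓝[>] r₁)) (𝓝 a)) ∧
      (∃ b ∈ ({r₂, R₂} : Set ℝ), Tendsto (fun z => ‖f z‖) (comap norm (𝓝[<] R₁)) (𝓝 b)) := by
  have hends := tendsto_norm_comap_norm_of_leftInvOn h₁'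
    (hf.continuousOn_invFunOn isOpen_annulus (isPreconnected_annulus h₁) hbij
      (annulus_nontrivial h₂ h₂'))
    hbij.surjOn.mapsTo_invFunOn hbij.mapsTo hbij.invOn_invFunOn.1
  have hν : ∀ {u v}, r₁ ≤ u → v ≤ R₁ → IsPreconnected (annulus u v) ∧
      ContinuousOn (fun z => ‖f z‖) (annulus u v) := fun hu hv =>
    ⟨isPreconnected_annulus (h₁.trans hu), continuous_norm.comp_continuousOn
      (hf.continuousOn.mono fun z hz => ⟨hu.trans_lt hz.1, hz.2.trans_le hv⟩)⟩
  constructor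
  · rcases (hasBasis_comap_norm_nhdsGT h₁').tendsto_nhds_or_of_isPreconnected
      (fun u hu => hν le_rfl hu.2) h₂' (hends.mono_left (comap_mono le_sup_left)) with h | h
    exacts [⟨r₂, by simp, h⟩, ⟨R₂, by simp, h⟩]
  · rcases (hasBasis_comap_norm_nhdsLT h₁').tendsto_nhds_or_of_isPreconnected
      (fun v hv => hν hv.2 le_rfl) h₂' (hends.mono_left (comap_mono le_sup_right)) with h | h
    exacts [⟨r₂, by simp, h⟩, ⟨R₂, by simp, h⟩]

open Complex.HadamardThreeLines in
theorem norm_le_exp_of_three_circles {f : ℂ → ℂ} {x₀ x₁ A B : ℝ} (hx : x₀ < x₁)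
    (hf : DifferentiableOn ℂ f (norm ⁻¹' Icc (exp x₀) (exp x₁)))
    (hA : ∀ z : ℂ, ‖z‖ = exp x₀ → ‖f z‖ ≤ exp A) (hB : ∀ z : ℂ, ‖z‖ = exp x₁ → ‖f z‖ ≤ exp B)
    {z : ℂ} (hz : ‖z‖ ∈ Icc (exp x₀) (exp x₁)) :
    ‖f z‖ ≤ exp (A + (log ‖z‖ - x₀) / (x₁ - x₀) * (B - A)) := by
  have hexp : MapsTo Complex.exp (verticalClosedStrip x₀ x₁) (norm ⁻¹' Icc (exp x₀) (exp x₁)) :=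
    fun w hw => by simpa [Complex.norm_exp] using And.intro (exp_le_exp.2 hw.1) (exp_le_exp.2 hw.2)
  have hd : DiffContOnCl ℂ (f ∘ Complex.exp) (verticalStrip x₀ x₁) := by
    refine DifferentiableOn.diffContOnCl ?_
    rw [verticalStrip, Complex.closure_preimage_re, closure_Ioo hx.ne]
    exact hf.comp Complex.differentiable_exp.differentiableOn hexp
  have hbdd : BddAbove ((norm ∘ f ∘ Complex.exp) '' verticalClosedStrip x₀ x₁) := by
    refine ((isCompact_norm_preimage_Icc _ _).image_of_continuousOn
      (continuous_norm.comp_continuousOn hf.continuousOn)).bddAbove.mono ?_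
    rintro _ ⟨w, hw, rfl⟩
    exact ⟨_, hexp hw, rfl⟩
  have hz0 : z ≠ 0 := norm_pos_iff.1 ((exp_pos x₀).trans_le hz.1)
  have key := norm_le_interp_of_mem_verticalClosedStrip' (z := Complex.log z) hx
    (by simpa [verticalClosedStrip, Complex.log_re, ← le_log_iff_exp_le (norm_pos_iff.2 hz0),
      ← log_le_iff_le_exp (norm_pos_iff.2 hz0)] using hz) hd hbdd
    (fun w hw => hA _ (by simp_all [Complex.norm_exp]))
    (fun w hw => hB _ (by simp_all [Complex.norm_exp]))
  simp only [Function.comp_apply, Complex.exp_log hz0, Complex.log_re] at key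
  rw [← exp_mul, ← exp_mul, ← exp_add] at key
  convert key using 2
  ring

theorem norm_le_exp_of_le_on_collars {f : ℂ → ℂ} {r R u v A B : ℝ} (hr : 0 < r) (hru : r < u)
    (hrv : r ≤ v) (hvR : v < R) (hf : DifferentiableOn ℂ f (annulus r R))
    (hA : ∀ z ∈ annulus r u, ‖f z‖ ≤ exp A) (hB : ∀ z ∈ annulus v R, ‖f z‖ ≤ exp B)
    {z : ℂ} (hz : z ∈ annulus r R) :
    ‖f z‖ ≤ exp (A + (log ‖z‖ - log r) / (log R - log r) * (B - A)) := by
  have hrR : r < R := hrv.trans_lt hvR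
  have hz₀ : 0 < ‖z‖ := hr.trans hz.1
  have hℓr : log r < log ‖z‖ := log_lt_log hr hz.1
  have hℓR : log ‖z‖ < log R := log_lt_log hz₀ hz.2
  set bound : ℝ × ℝ → ℝ := fun x => exp (A + (log ‖z‖ - x.1) / (x.2 - x.1) * (B - A))
  have hcont : ContinuousAt bound (log r, log R) := by
    have : log R - log r ≠ 0 := by linarith
    fun_prop (disch := assumption)
  have hle : 𝓝[>] log r ×ˢ 𝓝[<] log R ≤ 𝓝 (log r, log R) := by
    rw [nhds_prod_eq]; exact prod_mono nhdsWithin_le_nhds nhdsWithin_le_nhds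
  -- three circles between the circles of log-radii `x₀ < x₁`, which tend to the boundary
  refine ge_of_tendsto (hcont.tendsto.mono_left hle) ?_
  filter_upwards [prod_mem_prod (Ioo_mem_nhdsGT (lt_min (log_lt_log hr hru) hℓr))
    (Ioo_mem_nhdsLT (max_lt (log_lt_log (hr.trans_le hrv) hvR) hℓR))] with ⟨x₀, x₁⟩ ⟨hx₀, hx₁⟩
  have hx₀ℓ : x₀ < log ‖z‖ := hx₀.2.trans_le (min_le_right _ _)
  have hℓx₁ : log ‖z‖ < x₁ := (le_max_right _ _).trans_lt hx₁.1
  have hrx₀ : r < exp x₀ := (log_lt_iff_lt_exp hr).1 hx₀.1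
  have hx₁R : exp x₁ < R := (lt_log_iff_exp_lt (hr.trans hrR)).1 hx₁.2
  exact norm_le_exp_of_three_circles (hx₀ℓ.trans hℓx₁)
    (hf.mono fun w hw => ⟨hrx₀.trans_le hw.1, hw.2.trans_lt hx₁R⟩)
    (fun w hw => hA w ⟨hw ▸ hrx₀, hw ▸ (lt_log_iff_exp_lt (hr.trans hru)).1
      (hx₀.2.trans_le (min_le_left _ _))⟩)
    (fun w hw => hB w ⟨hw ▸ (log_lt_iff_lt_exp (hr.trans_le hrv)).1
      ((le_max_left _ _).trans_lt hx₁.1), hw ▸ hx₁R⟩)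
    ⟨((lt_log_iff_exp_lt hz₀).1 hx₀ℓ).le, ((log_lt_iff_lt_exp hz₀).1 hℓx₁).le⟩

theorem norm_le_exp_of_eventually_le {f : ℂ → ℂ} {r R A B : ℝ} (hr : 0 < r) (hrR : r < R)
    (hf : DifferentiableOn ℂ f (annulus r R))
    (hA : ∀ ε > 0, ∀ᶠ z in comap norm (𝓝[>] r), ‖f z‖ ≤ exp (A + ε))
    (hB : ∀ ε > 0, ∀ᶠ z in comap norm (𝓝[<] R), ‖f z‖ ≤ exp (B + ε))
    {z : ℂ} (hz : z ∈ annulus r R) :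
    ‖f z‖ ≤ exp (A + (log ‖z‖ - log r) / (log R - log r) * (B - A)) := by
  set bound : ℝ → ℝ := fun ε => exp (A + ε + (log ‖z‖ - log r) / (log R - log r) * (B - A))
  have hε : ∀ ε > 0, ‖f z‖ ≤ bound ε := fun ε hε => by
    obtain ⟨u, ⟨hru, -⟩, hAu⟩ := ((hasBasis_comap_norm_nhdsGT hrR).eventually_iff).1 (hA ε hε)
    obtain ⟨v, ⟨hvR, hrv⟩, hBv⟩ := ((hasBasis_comap_norm_nhdsLT hrR).eventually_iff).1 (hB ε hε)
    simpa only [bound, add_sub_add_right_eq_sub] using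
      norm_le_exp_of_le_on_collars hr hru hrv hvR hf hAu hBv hz
  have hlim : Tendsto bound (𝓝[>] 0) (𝓝 (bound 0)) :=
    (by fun_prop : Continuous bound).continuousAt.tendsto.mono_left nhdsWithin_le_nhds
  simpa [bound] using ge_of_tendsto hlim (eventually_nhdsWithin_of_forall hε)

theorem norm_eq_exp_of_tendsto {f : ℂ → ℂ} {r R a b : ℝ} (hr : 0 < r) (hrR : r < R)
    (hf : DifferentiableOn ℂ f (annulus r R)) (hf₀ : ∀ z ∈ annulus r R, f z ≠ 0)
    (ha : 0 < a) (hb : 0 < b)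
    (hin : Tendsto (fun z => ‖f z‖) (comap norm (𝓝[>] r)) (𝓝 a))
    (hout : Tendsto (fun z => ‖f z‖) (comap norm (𝓝[<] R)) (𝓝 b)) :
    ∃ α, ∀ z ∈ annulus r R,
      ‖f z‖ = exp (α + (log b - log a) / (log R - log r) * log ‖z‖) := by
  refine ⟨log a - (log b - log a) / (log R - log r) * log r, fun z hz => ?_⟩
  set t := (log ‖z‖ - log r) / (log R - log r)
  have hupper : ‖f z‖ ≤ exp (log a + t * (log b - log a)) :=
    norm_le_exp_of_eventually_le hr hrR hf (fun _ => hin.eventually_le_exp_log_add ha)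
      (fun _ => hout.eventually_le_exp_log_add hb) hz
  have hlower : ‖(f z)⁻¹‖ ≤ exp (log a⁻¹ + t * (log b⁻¹ - log a⁻¹)) := by
    have hinv : ∀ {l : Filter ℂ} {c : ℝ}, Tendsto (fun z => ‖f z‖) l (𝓝 c) → 0 < c →
        Tendsto (fun z => ‖(f z)⁻¹‖) l (𝓝 c⁻¹) := fun h hc => by
      simpa only [norm_inv] using h.inv₀ hc.ne'
    exact norm_le_exp_of_eventually_le hr hrR (hf.inv hf₀)
      (fun _ => (hinv hin ha).eventually_le_exp_log_add (inv_pos.2 ha))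
      (fun _ => (hinv hout hb).eventually_le_exp_log_add (inv_pos.2 hb)) hz
  rw [norm_inv, log_inv, log_inv, show -log a + t * (-log b - -log a) =
    -(log a + t * (log b - log a)) by ring, exp_neg,
    inv_le_inv₀ (norm_pos_iff.2 (hf₀ z hz)) (exp_pos _)] at hlower
  rw [le_antisymm hupper hlower]
  congr 1
  simp only [t]
  ring

theorem mul_deriv_eq_of_norm_eq_exp {f : ℂ → ℂ} {U : Set ℂ} (hU : IsOpen U)
    (hf : DifferentiableOn ℂ f U) {α s : ℝ}
    (hmod : ∀ z ∈ U, ‖f z‖ = exp (α + s * log ‖z‖)) {z₀ : ℂ} (hz₀ : z₀ ∈ U) (h₀ : z₀ ≠ 0) :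
    z₀ * deriv f z₀ = s * f z₀ := by
  -- `F` has constant modulus, hence is locally constant by the maximum modulus principle
  set F : ℂ → ℂ := fun z => f z * Complex.exp (-s * Complex.log (z / z₀))
  have hnorm : ∀ z ∈ U, z ≠ 0 → ‖F z‖ = exp (α + s * log ‖z₀‖) := fun z hz hz0 => by
    rw [norm_mul, Complex.norm_exp, hmod z hz, ← exp_add, ← Complex.ofReal_neg,
      Complex.re_ofReal_mul, Complex.log_re, norm_div,
      log_div (norm_ne_zero_iff.2 hz0) (norm_ne_zero_iff.2 h₀)]
    ring_nf
  have hslit : ∀ᶠ z in 𝓝 z₀, z / z₀ ∈ Complex.slitPlane :=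
    (continuous_id.div_const z₀).continuousAt.preimage_mem_nhds
      (Complex.isOpen_slitPlane.mem_nhds (by simp [h₀]))
  have hdiff : ∀ᶠ z in 𝓝 z₀, DifferentiableAt ℂ F z := by
    filter_upwards [hU.mem_nhds hz₀, hslit] with z hz hzslit
    exact (hf.differentiableAt (hU.mem_nhds hz)).mul
      ((((differentiableAt_id.div_const z₀).clog hzslit).const_mul _).cexp)
  have hmax : IsLocalMax (norm ∘ F) z₀ := by
    filter_upwards [hU.mem_nhds hz₀, eventually_ne_nhds h₀] with z hz hz0
    exact ((hnorm z hz hz0).trans (hnorm z₀ hz₀ h₀).symm).le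
  have hF0 : HasDerivAt F 0 z₀ := (hasDerivAt_const z₀ (F z₀)).congr_of_eventuallyEq
    (Complex.eventually_eq_of_isLocalMax_norm hdiff hmax)
  have hF := (hf.differentiableAt (hU.mem_nhds hz₀)).hasDerivAt.mul
    ((((hasDerivAt_id' z₀).div_const z₀).clog (by simp [h₀])).const_mul (-(s : ℂ))).cexp
  simp only [div_self h₀, Complex.log_one, mul_zero, Complex.exp_zero, mul_one, one_mul] at hF
  have := hF0.unique hF
  field_simp at this
  linear_combination -this

theorem abs_eq_one_of_injOn_sphere {f : ℂ → ℂ} {ρ s : ℝ} (hρ : 0 < ρ)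
    (hf : ∀ z ∈ sphere (0 : ℂ) ρ, DifferentiableAt ℂ f z)
    (hderiv : ∀ z ∈ sphere (0 : ℂ) ρ, z * deriv f z = s * f z)
    (hinj : InjOn f (sphere (0 : ℂ) ρ)) : |s| = 1 := by
  set c : ℝ → ℂ := fun θ => f (circleMap 0 ρ θ)
  have hγ : ∀ θ, circleMap 0 ρ θ ∈ sphere (0 : ℂ) ρ := circleMap_mem_sphere 0 hρ.le
  have hc : ∀ θ, c θ = c 0 * Complex.exp (Complex.I * s * θ) := by
    refine eq_mul_cexp_of_hasDerivAt _ fun θ => ?_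
    refine ((hf _ (hγ θ)).hasDerivAt.comp θ (hasDerivAt_circleMap 0 ρ θ)).congr_deriv ?_
    linear_combination Complex.I * hderiv _ (hγ θ)
  have hne : ∀ θ ∈ Ioo 0 (2 * π), c θ ≠ c 0 := fun θ hθ h =>
    hθ.1.ne' (injOn_circleMap_of_abs_sub_le' hρ.ne' (by simp) ⟨hθ.1.le, hθ.2⟩
      ⟨le_rfl, two_pi_pos⟩ (hinj (hγ θ) (hγ 0) h))
  have hc0 : c 0 ≠ 0 := fun h0 =>
    hne π ⟨pi_pos, by linarith [pi_pos]⟩ (by rw [hc π, h0, zero_mul])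
  refine abs_eq_one_of_cexp_two_pi ?_ fun θ hθ h1 => hne θ hθ (by rw [hc θ, h1, mul_one])
  have h2π : c (2 * π) = c 0 := by
    simp only [c]
    rw [← zero_add (2 * π), periodic_circleMap 0 ρ 0]
  rw [hc (2 * π)] at h2π
  exact (mul_eq_left₀ hc0).1 h2π

theorem div_eq_div_of_abs_log_sub_div {r₁ R₁ r₂ R₂ a b : ℝ} (h₁ : 0 < r₁) (h₁' : r₁ < R₁)
    (h₂ : 0 < r₂) (h₂' : r₂ < R₂) (ha : a ∈ ({r₂, R₂} : Set ℝ)) (hb : b ∈ ({r₂, R₂} : Set ℝ))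
    (h : |(log b - log a) / (log R₁ - log r₁)| = 1) : R₁ / r₁ = R₂ / r₂ := by
  have hL₁ : 0 < log R₁ - log r₁ := sub_pos.2 (log_lt_log h₁ h₁')
  have hL₂ : 0 < log R₂ - log r₂ := sub_pos.2 (log_lt_log h₂ h₂')
  rw [abs_div, abs_of_pos hL₁, div_eq_one_iff_eq hL₁.ne'] at h
  have hL : log R₂ - log r₂ = log R₁ - log r₁ := by
    rcases ha with rfl | rfl <;> rcases hb with rfl | rfl
    · rw [sub_self, abs_zero] at h; linarith
    · rwa [abs_of_pos hL₂] at h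
    · rwa [abs_sub_comm, abs_of_pos hL₂] at h
    · rw [sub_self, abs_zero] at h; linarith
  rw [← exp_log (div_pos (h₁.trans h₁') h₁), ← exp_log (div_pos (h₂.trans h₂') h₂),
    log_div (h₁.trans h₁').ne' h₁.ne', log_div (h₂.trans h₂').ne' h₂.ne', hL]

theorem annuli_conformally_equivalent_iff_same_modulus
    (r₁ R₁ r₂ R₂ : ℝ) (h₁ : 0 < r₁) (h₁' : r₁ < R₁) (h₂ : 0 < r₂) (h₂' : r₂ < R₂)
    (f : ℂ → ℂ)
    (hf : DifferentiableOn ℂ f {z : ℂ | r₁ < ‖z‖ ∧ ‖z‖ < R₁})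
    (hbij : Set.BijOn f {z : ℂ | r₁ < ‖z‖ ∧ ‖z‖ < R₁}
      {z : ℂ | r₂ < ‖z‖ ∧ ‖z‖ < R₂}) :
    R₁ / r₁ = R₂ / r₂ := by
  change DifferentiableOn ℂ f (annulus r₁ R₁) at hf
  change BijOn f (annulus r₁ R₁) (annulus r₂ R₂) at hbij
  obtain ⟨⟨a, ha, hin⟩, ⟨b, hb, hout⟩⟩ :=
    exists_tendsto_norm_of_bijOn h₁.le h₁' h₂.le h₂' hf hbij
  have hpos : ∀ c ∈ ({r₂, R₂} : Set ℝ), 0 < c := by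
    rintro c (rfl | rfl) <;> linarith
  obtain ⟨α, hmod⟩ := norm_eq_exp_of_tendsto h₁ h₁' hf
    (fun z hz => norm_pos_iff.1 (h₂.trans (hbij.mapsTo hz).1)) (hpos a ha) (hpos b hb) hin hout
  set ρ := (r₁ + R₁) / 2
  have hρ : 0 < ρ := by simp only [ρ]; linarith
  have hsphere : sphere (0 : ℂ) ρ ⊆ annulus r₁ R₁ := fun z hz => by
    rw [mem_sphere_zero_iff_norm] at hz
    exact ⟨by simp only [hz, ρ]; linarith, by simp only [hz, ρ]; linarith⟩
  refine div_eq_div_of_abs_log_sub_div h₁ h₁' h₂ h₂' ha hb <|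
    abs_eq_one_of_injOn_sphere hρ
      (fun z hz => hf.differentiableAt (isOpen_annulus.mem_nhds (hsphere hz)))
      (fun z hz => mul_deriv_eq_of_norm_eq_exp isOpen_annulus hf hmod (hsphere hz)
        (norm_pos_iff.1 (h₁.trans (hsphere hz).1)))
      (hbij.injOn.mono hsphere)
end
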